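/- Let n ≥ 1, let β^(2n) = (β_{ij})_{0≤i+j≤2n} be a real sequence, let Ψ(x,y) = (a+bx+cy, d+ex+fy) with bf − ce ≠ 0, and let β̃^(2n) be the transformed sequence β̃_{ij} := L_β(Ψ₁^i Ψ₂^j). Then M(n) admits a flat extension if and only if M̃(n) admits a flat extension. -/

import Mathlib

/-- Index set for the moment matrix of degree `n`:
pairs `(i,j)` of nonnegative integers with `i + j ≤ n`. -/
abbrev MIdx (n : ℕ) := {ij : Fin (n+1) × Fin (n+1) // (ij.1 : ℕ) + (ij.2 : ℕ) ≤ n}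

/-- The moment matrix `M(n)` of a real sequence `β = (β_{ij})`:
`M(n)[(i,j),(k,l)] = β_{i+k, j+l}`. -/
def momentMatrix (n : ℕ) (β : ℕ → ℕ → ℝ) : Matrix (MIdx n) (MIdx n) ℝ :=
  fun p q => β ((p.val.1 : ℕ) + (q.val.1 : ℕ)) ((p.val.2 : ℕ) + (q.val.2 : ℕ))
open MvPolynomial

/-- The Riesz functional of a sequence `β`: `L_β(Σ p_{ij} x^i y^j) = Σ p_{ij} β_{ij}`. -/
noncomputable def riesz (β : ℕ → ℕ → ℝ) (p : MvPolynomial (Fin 2) ℝ) : ℝ :=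
  ∑ m ∈ p.support, p.coeff m * β (m 0) (m 1)

/-- The sequence transformed by the degree-one map
`Ψ(x,y) = (a + bx + cy, d + ex + fy)`:  `β̃_{ij} := L_β(Ψ₁^i Ψ₂^j)`. -/
noncomputable def transSeq (β : ℕ → ℕ → ℝ) (a b c d e f : ℝ) (i j : ℕ) : ℝ :=
  riesz β ((C a + C b * X 0 + C c * X 1) ^ i * (C d + C e * X 0 + C f * X 1) ^ j)

/-- `M(n)` admits a flat extension `M(n+1)`: the sequence can be extended by new
moments of degrees `2n+1` and `2n+2` so that the extended moment matrix `M(n+1)`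
is positive semidefinite with `rank M(n+1) = rank M(n)`. -/
def HasFlatExtension (n : ℕ) (β : ℕ → ℕ → ℝ) : Prop :=
  ∃ β' : ℕ → ℕ → ℝ,
    (∀ i j : ℕ, i + j ≤ 2 * n → β' i j = β i j) ∧
    (momentMatrix (n + 1) β').PosSemidef ∧
    (momentMatrix (n + 1) β').rank = (momentMatrix n β).rank

/-!
Write `Ψ*` for the substitution `p ↦ p ∘ Ψ`, an automorphism of `ℝ[x,y]` that does not raise
degrees, with inverse `(Ψ⁻¹)*` of the same kind. Then `β̃_{ij} = L_β(Ψ*(x^i y^j))`, i.e.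
`L_β̃ = L_β ∘ Ψ*`, and expanding `Ψ*(x^i y^j)` in the monomials of degree `≤ N` gives
`M̃(N) = J M(N) Jᵀ` with `J` the matrix of `Ψ*` on polynomials of degree `≤ N`. So `Ψ*` carries
positive semidefinite moment matrices to positive semidefinite ones without raising the rank,
and applying the same to `(Ψ⁻¹)*` shows that ranks are preserved. Hence a flat extension `β'`
of `β` yields the flat extension `L_β' ∘ Ψ*` of `β̃`, and `(Ψ⁻¹)*` carries flat extensions back.
-/

noncomputable section

open Matrix

local notation "𝓟" => MvPolynomial (Fin 2) ℝ

namespace MIdx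

variable {N : ℕ}

def exponent (q : MIdx N) : Fin 2 →₀ ℕ :=
  Finsupp.single 0 (q.1.1 : ℕ) + Finsupp.single 1 (q.1.2 : ℕ)

@[simp] theorem exponent_apply_zero (q : MIdx N) : exponent q 0 = q.1.1 := by simp [exponent]

@[simp] theorem exponent_apply_one (q : MIdx N) : exponent q 1 = q.1.2 := by simp [exponent]

theorem exponent_injective : Function.Injective (exponent (N := N)) := by
  intro p q h
  have h0 := congrArg (· 0) h
  have h1 := congrArg (· 1) h
  simp only [exponent_apply_zero, exponent_apply_one] at h0 h1
  exact Subtype.ext (Prod.ext (Fin.ext h0) (Fin.ext h1))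

theorem exists_exponent_eq {m : Fin 2 →₀ ℕ} (hm : m 0 + m 1 ≤ N) : ∃ q : MIdx N, exponent q = m :=
  ⟨⟨(⟨m 0, by omega⟩, ⟨m 1, by omega⟩), hm⟩, by ext i; fin_cases i <;> simp⟩

end MIdx

theorem monomial_eq_C_mul_X_pow_mul_X_pow (m : Fin 2 →₀ ℕ) (r : ℝ) :
    monomial m r = C r * (X 0 ^ m 0 * X 1 ^ m 1) := by
  rw [monomial_eq, Finsupp.prod_fintype _ _ (by simp), Fin.prod_univ_two]

theorem add_le_of_mem_support_of_totalDegree_le {p : 𝓟} {N : ℕ}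
    (hp : p.totalDegree ≤ N) {m : Fin 2 →₀ ℕ} (hm : m ∈ p.support) : m 0 + m 1 ≤ N := by
  have h := le_totalDegree hm
  rw [Finsupp.sum_fintype _ _ (by simp), Fin.sum_univ_two] at h
  omega

theorem sum_support_eq_sum_midx {M : Type*} [AddCommMonoid M] [Module ℝ M]
    {p : 𝓟} {N : ℕ} (hp : p.totalDegree ≤ N) (F : (Fin 2 →₀ ℕ) → M) :
    ∑ m ∈ p.support, p.coeff m • F m
      = ∑ q : MIdx N, p.coeff (MIdx.exponent q) • F (MIdx.exponent q) := by
  classical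
  rw [← Finset.sum_image (f := fun m => p.coeff m • F m)
    (fun _ _ _ _ h => MIdx.exponent_injective h)]
  refine Finset.sum_subset (fun m hm => ?_) (fun m _ hm => ?_)
  · obtain ⟨q, rfl⟩ := MIdx.exists_exponent_eq (add_le_of_mem_support_of_totalDegree_le hp hm)
    exact Finset.mem_image_of_mem _ (Finset.mem_univ q)
  · rw [notMem_support_iff.1 hm, zero_smul]

def coeffVec (N : ℕ) (p : 𝓟) : MIdx N → ℝ :=
  fun q => p.coeff (MIdx.exponent q)

theorem eq_sum_coeffVec {p : 𝓟} {N : ℕ} (hp : p.totalDegree ≤ N) :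
    p = ∑ q : MIdx N, monomial (MIdx.exponent q) (coeffVec N p q) := by
  conv_lhs => rw [p.as_sum]
  simpa only [coeffVec, smul_monomial, smul_eq_mul, mul_one] using
    sum_support_eq_sum_midx hp (fun m => monomial m (1 : ℝ))

section Riesz

variable (β : ℕ → ℕ → ℝ)

def rieszLinear : 𝓟 →ₗ[ℝ] ℝ :=
  Finsupp.linearCombination ℝ (fun m : Fin 2 →₀ ℕ => β (m 0) (m 1)) ∘ₗ
    (AddMonoidAlgebra.coeffLinearEquiv ℝ).toLinearMap

theorem rieszLinear_apply (p : 𝓟) : rieszLinear β p = riesz β p := rfl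

theorem riesz_monomial (m : Fin 2 →₀ ℕ) (r : ℝ) : riesz β (monomial m r) = r * β (m 0) (m 1) := by
  rw [← rieszLinear_apply, rieszLinear, LinearMap.comp_apply, LinearEquiv.coe_coe,
    AddMonoidAlgebra.coeffLinearEquiv_apply, ← single_eq_monomial, AddMonoidAlgebra.coeff_single,
    Finsupp.linearCombination_single, smul_eq_mul]

theorem riesz_congr {β' : ℕ → ℕ → ℝ} {D : ℕ} (h : ∀ i j, i + j ≤ D → β' i j = β i j)
    {p : 𝓟} (hp : p.totalDegree ≤ D) : riesz β' p = riesz β p :=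
  Finset.sum_congr rfl fun _ hm => by rw [h _ _ (add_le_of_mem_support_of_totalDegree_le hp hm)]

theorem riesz_mul_eq_dotProduct {N : ℕ} {p q : 𝓟}
    (hp : p.totalDegree ≤ N) (hq : q.totalDegree ≤ N) :
    riesz β (p * q) = coeffVec N p ⬝ᵥ (momentMatrix N β *ᵥ coeffVec N q) := by
  conv_lhs => rw [eq_sum_coeffVec hp, eq_sum_coeffVec hq, Finset.sum_mul_sum, ← rieszLinear_apply]
  simp only [map_sum, rieszLinear_apply, monomial_mul, riesz_monomial, dotProduct, mulVec,
    Finset.mul_sum, Finsupp.add_apply, MIdx.exponent_apply_zero, MIdx.exponent_apply_one]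
  refine Finset.sum_congr rfl fun r _ => Finset.sum_congr rfl fun s _ => ?_
  simp only [momentMatrix]
  ring

end Riesz

theorem totalDegree_map_X_pow_mul_X_pow_le
    (φ : 𝓟 →ₐ[ℝ] 𝓟) (hφ : ∀ k, (φ (X k)).totalDegree ≤ 1)
    (i j : ℕ) : (φ (X 0 ^ i * X 1 ^ j)).totalDegree ≤ i + j := by
  rw [map_mul, map_pow, map_pow]
  refine (totalDegree_mul _ _).trans (add_le_add ?_ ?_) <;>
    refine (totalDegree_pow _ _).trans ?_
  · simpa using Nat.mul_le_mul_left i (hφ 0)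
  · simpa using Nat.mul_le_mul_left j (hφ 1)

section Transport

variable (β : ℕ → ℕ → ℝ) (φ : 𝓟 →ₐ[ℝ] 𝓟)

def pushSeq (i j : ℕ) : ℝ :=
  riesz β (φ (X 0 ^ i * X 1 ^ j))

theorem riesz_pushSeq (p : 𝓟) : riesz (pushSeq β φ) p = riesz β (φ p) := by
  induction p using MvPolynomial.induction_on' with
  | monomial m r =>
    rw [riesz_monomial, monomial_eq_C_mul_X_pow_mul_X_pow, map_mul, algHom_C, algebraMap_eq,
      C_mul', ← rieszLinear_apply, map_smul, smul_eq_mul, rieszLinear_apply, pushSeq]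
  | add p q hp hq =>
    simp only [← rieszLinear_apply, map_add] at hp hq ⊢
    rw [hp, hq]

theorem pushSeq_pushSeq (ψ : 𝓟 →ₐ[ℝ] 𝓟) :
    pushSeq (pushSeq β φ) ψ = pushSeq β (φ.comp ψ) :=
  funext₂ fun _ _ => riesz_pushSeq β φ _

theorem pushSeq_id : pushSeq β (AlgHom.id ℝ _) = β := by
  funext i j
  rw [pushSeq, AlgHom.id_apply, X_pow_eq_monomial, X_pow_eq_monomial, monomial_mul, one_mul,
    riesz_monomial]
  simp

theorem pushSeq_congr {β' : ℕ → ℕ → ℝ} {D : ℕ} (hφ : ∀ k, (φ (X k)).totalDegree ≤ 1)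
    (h : ∀ i j, i + j ≤ D → β' i j = β i j) (i j : ℕ) (hij : i + j ≤ D) :
    pushSeq β' φ i j = pushSeq β φ i j :=
  riesz_congr β h ((totalDegree_map_X_pow_mul_X_pow_le φ hφ i j).trans hij)

end Transport

section MomentMatrix

variable (φ : 𝓟 →ₐ[ℝ] 𝓟)

def changeOfBasis (N : ℕ) : Matrix (MIdx N) (MIdx N) ℝ :=
  Matrix.of fun p => coeffVec N (φ (X 0 ^ (p.1.1 : ℕ) * X 1 ^ (p.1.2 : ℕ)))

variable {φ} (hφ : ∀ k, (φ (X k)).totalDegree ≤ 1)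
include hφ

theorem momentMatrix_pushSeq (N : ℕ) (β : ℕ → ℕ → ℝ) :
    momentMatrix N (pushSeq β φ) = changeOfBasis φ N * momentMatrix N β * (changeOfBasis φ N)ᵀ := by
  ext p q
  have hmul : φ (X 0 ^ ((p.1.1 : ℕ) + q.1.1) * X 1 ^ ((p.1.2 : ℕ) + q.1.2))
      = φ (X 0 ^ (p.1.1 : ℕ) * X 1 ^ (p.1.2 : ℕ)) * φ (X 0 ^ (q.1.1 : ℕ) * X 1 ^ (q.1.2 : ℕ)) := by
    rw [← map_mul]
    ring_nf
  rw [mul_mul_apply, transpose_transpose]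
  change pushSeq β φ _ _ = _
  rw [pushSeq, hmul, riesz_mul_eq_dotProduct β
    ((totalDegree_map_X_pow_mul_X_pow_le φ hφ _ _).trans p.2)
    ((totalDegree_map_X_pow_mul_X_pow_le φ hφ _ _).trans q.2)]
  rfl

theorem posSemidef_momentMatrix_pushSeq {N : ℕ} {β : ℕ → ℕ → ℝ}
    (h : (momentMatrix N β).PosSemidef) : (momentMatrix N (pushSeq β φ)).PosSemidef := by
  simpa only [momentMatrix_pushSeq hφ, conjTranspose_eq_transpose_of_trivial] using
    h.mul_mul_conjTranspose_same (changeOfBasis φ N)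

theorem rank_momentMatrix_pushSeq_le (N : ℕ) (β : ℕ → ℕ → ℝ) :
    (momentMatrix N (pushSeq β φ)).rank ≤ (momentMatrix N β).rank := by
  rw [momentMatrix_pushSeq hφ]
  exact (rank_mul_le_left _ _).trans (rank_mul_le_right _ _)

end MomentMatrix

section FlatExtension

variable (Ψ : 𝓟 ≃ₐ[ℝ] 𝓟)

theorem pushSeq_pushSeq_symm (β : ℕ → ℕ → ℝ) : pushSeq (pushSeq β Ψ) Ψ.symm = β := by
  rw [pushSeq_pushSeq, AlgEquiv.comp_symm, pushSeq_id]

variable {Ψ} (hΨ : ∀ k, (Ψ (X k)).totalDegree ≤ 1) (hΨ' : ∀ k, (Ψ.symm (X k)).totalDegree ≤ 1)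
include hΨ hΨ'

theorem rank_momentMatrix_pushSeq (N : ℕ) (β : ℕ → ℕ → ℝ) :
    (momentMatrix N (pushSeq β Ψ)).rank = (momentMatrix N β).rank := by
  refine le_antisymm (rank_momentMatrix_pushSeq_le hΨ N β) ?_
  simpa only [pushSeq_pushSeq_symm] using
    rank_momentMatrix_pushSeq_le (φ := (Ψ.symm : _ →ₐ[ℝ] _)) hΨ' N (pushSeq β Ψ)

theorem hasFlatExtension_pushSeq {n : ℕ} {β : ℕ → ℕ → ℝ} (h : HasFlatExtension n β) :
    HasFlatExtension n (pushSeq β Ψ) := by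
  obtain ⟨β', hagree, hpsd, hrank⟩ := h
  refine ⟨pushSeq β' Ψ, ?_, ?_, ?_⟩
  · exact pushSeq_congr β Ψ hΨ hagree
  · exact posSemidef_momentMatrix_pushSeq hΨ hpsd
  · rw [rank_momentMatrix_pushSeq hΨ hΨ', rank_momentMatrix_pushSeq hΨ hΨ', hrank]

theorem hasFlatExtension_pushSeq_iff {n : ℕ} {β : ℕ → ℕ → ℝ} :
    HasFlatExtension n (pushSeq β Ψ) ↔ HasFlatExtension n β := by
  refine ⟨fun h => ?_, hasFlatExtension_pushSeq hΨ hΨ'⟩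
  simpa only [pushSeq_pushSeq_symm] using
    hasFlatExtension_pushSeq hΨ' (by simpa only [AlgEquiv.symm_symm]) h

end FlatExtension

section Affine

def affinePoly (a b c : ℝ) : 𝓟 :=
  C a + C b * X 0 + C c * X 1

theorem totalDegree_affinePoly_le (a b c : ℝ) : (affinePoly a b c).totalDegree ≤ 1 := by
  refine (totalDegree_add _ _).trans (max_le ((totalDegree_add _ _).trans (max_le ?_ ?_)) ?_)
  · simp
  all_goals exact (totalDegree_mul _ _).trans (by simp)

theorem C_inv_mul_det_eq_one {b c e f : ℝ} (hD : b * f - c * e ≠ 0) :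
    C (b * f - c * e)⁻¹ * (C b * C f - C c * C e : 𝓟) = 1 := by
  rw [← C_mul, ← C_mul, ← C_sub, ← C_mul, inv_mul_cancel₀ hD, C_1]

-- Cramer's rule: for `u = a + bx + cy`, `v = d + ex + fy` and `D = bf - ce`,
-- `x = (f (u - a) - c (v - d)) / D` and `y = (b (v - d) - e (u - a)) / D`.
def affineEquiv (a b c d e f : ℝ) (hD : b * f - c * e ≠ 0) : 𝓟 ≃ₐ[ℝ] 𝓟 :=
  AlgEquiv.ofAlgHom (aeval ![affinePoly a b c, affinePoly d e f])
    (aeval ![affinePoly ((c * d - f * a) / (b * f - c * e)) (f / (b * f - c * e))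
        (-c / (b * f - c * e)),
      affinePoly ((e * a - b * d) / (b * f - c * e)) (-e / (b * f - c * e))
        (b / (b * f - c * e))])
    (by
      ext i : 1
      fin_cases i <;> simp only [AlgHom.comp_apply, AlgHom.id_apply, Fin.zero_eta,
        Fin.mk_one, cons_val_zero, cons_val_one, cons_val_fin_one, affinePoly, map_add, map_sub,
        map_neg, map_mul, aeval_X, aeval_C, algebraMap_eq, div_eq_mul_inv]
      · linear_combination (X 0 : 𝓟) * C_inv_mul_det_eq_one hD
      · linear_combination (X 1 : 𝓟) * C_inv_mul_det_eq_one hD)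
    (by
      ext i : 1
      fin_cases i <;> simp only [AlgHom.comp_apply, AlgHom.id_apply, Fin.zero_eta,
        Fin.mk_one, cons_val_zero, cons_val_one, cons_val_fin_one, affinePoly, map_add, map_sub,
        map_neg, map_mul, aeval_X, aeval_C, algebraMap_eq, div_eq_mul_inv]
      · linear_combination (X 0 - C a : 𝓟) * C_inv_mul_det_eq_one hD
      · linear_combination (X 1 - C d : 𝓟) * C_inv_mul_det_eq_one hD)

variable {a b c d e f : ℝ}

theorem totalDegree_affineEquiv_X_le (hD : b * f - c * e ≠ 0) (k : Fin 2) :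
    (affineEquiv a b c d e f hD (X k)).totalDegree ≤ 1 := by
  fin_cases k <;> simpa [affineEquiv] using totalDegree_affinePoly_le _ _ _

theorem totalDegree_affineEquiv_symm_X_le (hD : b * f - c * e ≠ 0) (k : Fin 2) :
    ((affineEquiv a b c d e f hD).symm (X k)).totalDegree ≤ 1 := by
  fin_cases k <;> simpa [affineEquiv] using totalDegree_affinePoly_le _ _ _

theorem transSeq_eq_pushSeq (β : ℕ → ℕ → ℝ) (hD : b * f - c * e ≠ 0) :
    transSeq β a b c d e f = pushSeq β (affineEquiv a b c d e f hD) := by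
  funext i j
  simp [transSeq, pushSeq, affineEquiv, affinePoly]

end Affine

end

theorem momentMatrix_transform_flatExtension_iff_general
    (n : ℕ) (β : ℕ → ℕ → ℝ) (a b c d e f : ℝ)
    (hdet : b * f - c * e ≠ 0) :
    HasFlatExtension n β ↔ HasFlatExtension n (transSeq β a b c d e f) := by
  rw [transSeq_eq_pushSeq β hdet]
  exact (hasFlatExtension_pushSeq_iff (totalDegree_affineEquiv_X_le hdet)
    (totalDegree_affineEquiv_symm_X_le hdet)).symm

/-- Invariance under degree-one transformations, part (6).
`M(n)` admits a flat extension iff `M̃(n)` admits a flat extension. -/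
theorem momentMatrix_transform_flatExtension_iff
    (n : ℕ) (hn : 1 ≤ n) (β : ℕ → ℕ → ℝ) (a b c d e f : ℝ)
    (hdet : b * f - c * e ≠ 0) :
    HasFlatExtension n β ↔ HasFlatExtension n (transSeq β a b c d e f) :=
  momentMatrix_transform_flatExtension_iff_general n β a b c d e f hdet
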